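/- Perturbation identities for the Drazin inverse under a norm condition: let A, E, B, X, Y be n×n quaternion matrices with B = A + E. Assume X is a k-Drazin inverse of A, Y is an m-Drazin inverse of B, E = (A * X) * E * (A * X), and ‖X * E‖₂ < 1. Then: (i) A * X = B * Y; (ii) Y - X = -(Y * E * X) and Y - X = -(X * E * Y); (iii) 1 + X * E and 1 + E * X are units of the matrix ring, and (1 + X * E) * Y = X and Y * (1 + E * X) = X. -/

import Mathlib

noncomputable section

notation "ℍ" => Quaternion ℝ

/-- The bounded ℝ-linear map `x ↦ M.mulVec x` between `PiLp 2` spaces of quaternion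
vectors. -/
def mulVecCLM {m n : ℕ} (M : Matrix (Fin m) (Fin n) ℍ) :
    PiLp 2 (fun _ : Fin n => ℍ) →L[ℝ] PiLp 2 (fun _ : Fin m => ℍ) :=
  LinearMap.toContinuousLinearMap
    { toFun := fun x => WithLp.toLp 2 (M.mulVec x)
      map_add' := fun x y => by simp [Matrix.mulVec_add]
      map_smul' := fun r x => by simp [Matrix.mulVec_smul] }

/-- The spectral norm of a quaternion matrix: the operator norm of `x ↦ M.mulVec x`. -/
def specNorm {m n : ℕ} (M : Matrix (Fin m) (Fin n) ℍ) : ℝ := ‖mulVecCLM M‖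

/-- `X` is a `k`-Drazin inverse of the square quaternion matrix `A`. -/
def IsDrazinInverse {n : ℕ} (A X : Matrix (Fin n) (Fin n) ℍ) (k : ℕ) : Prop :=
  A ^ k * X * A = A ^ k ∧ X * A * X = X ∧ A * X = X * A

/-!
The norm bound makes `1 + X * E` injective on vectors (a nonzero `v` with `X * E * v = -v` would
satisfy `‖v‖ ≤ ‖X * E‖₂ ‖v‖ < ‖v‖`), hence a unit of the Artinian ring of quaternion matrices.
Since `A * X * E = E = E * (A * X)`, one has `A * (1 + X * E) = B = (1 + E * X) * A`, so
`Z = (1 + X * E)⁻¹ * X` satisfies `B * Z = Z * B = A * X`, and `E * (1 - A * X) = 0` gives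
`B ^ k * (1 - A * X) = (1 - A * X) * A ^ k = 0`. Thus `Z` is a `k`-Drazin inverse of `B`, and
Drazin inverses are unique whatever their indices, so `Y = Z`; all identities follow from this.
-/

theorem IsIdempotentElem.mul_eq_and_mul_eq_of_eq_mul_mul {R : Type*} [Semigroup R] {p e : R}
    (hp : IsIdempotentElem p) (he : e = p * e * p) : p * e = e ∧ e * p = e := by
  constructor
  · conv_lhs => rw [he, ← mul_assoc, ← mul_assoc, hp.eq]
    exact he.symm
  · conv_lhs => rw [he, mul_assoc, hp.eq]
    exact he.symm

theorem isUnit_one_add_mul_comm {R : Type*} [Ring R] {a b : R} (h : IsUnit (1 + a * b)) :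
    IsUnit (1 + b * a) := by
  obtain ⟨u, hu⟩ := h
  refine ⟨⟨1 + b * a, 1 - b * ↑u⁻¹ * a, ?_, ?_⟩, rfl⟩
  · calc (1 + b * a) * (1 - b * ↑u⁻¹ * a) = 1 + b * a - b * ((1 + a * b) * ↑u⁻¹) * a := by
          noncomm_ring
      _ = 1 := by rw [← hu, u.mul_inv]; noncomm_ring
  · calc (1 - b * ↑u⁻¹ * a) * (1 + b * a) = 1 + b * a - b * (↑u⁻¹ * (1 + a * b)) * a := by
          noncomm_ring
      _ = 1 := by rw [← hu, u.inv_mul]; noncomm_ring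

structure IsDrazinInv {M : Type*} [Monoid M] (a x : M) (k : ℕ) : Prop where
  pow_mul_mul : a ^ k * x * a = a ^ k
  mul_mul_self : x * a * x = x
  commute : Commute a x

theorem isDrazinInverse_iff {n k : ℕ} {A X : Matrix (Fin n) (Fin n) ℍ} :
    IsDrazinInverse A X k ↔ IsDrazinInv A X k :=
  ⟨fun ⟨h₁, h₂, h₃⟩ => ⟨h₁, h₂, h₃⟩, fun ⟨h₁, h₂, h₃⟩ => ⟨h₁, h₂, h₃⟩⟩

namespace IsDrazinInv

section Monoid

variable {M : Type*} [Monoid M] {a x z : M} {k m : ℕ}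

theorem pow_succ_mul_pow (hx : x * a * x = x) (hc : Commute a x) (j : ℕ) :
    x ^ (j + 1) * a ^ j = x := by
  induction j with
  | zero => simp
  | succ j ih =>
    calc x ^ (j + 2) * a ^ (j + 1) = x * (x ^ (j + 1) * a ^ j) * a := by
          rw [pow_succ' x (j + 1), pow_succ a j]; simp only [mul_assoc]
      _ = x := by rw [ih, mul_assoc, ← hc.eq, ← mul_assoc, hx]

theorem pow_mul_pow_succ (hx : x * a * x = x) (hc : Commute a x) (j : ℕ) :
    a ^ j * x ^ (j + 1) = x :=
  ((hc.pow_pow j (j + 1)).eq).trans (pow_succ_mul_pow hx hc j)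

theorem mono (h : IsDrazinInv a x k) (hkm : k ≤ m) : IsDrazinInv a x m := by
  obtain ⟨i, rfl⟩ := Nat.exists_eq_add_of_le' hkm
  refine ⟨?_, h.mul_mul_self, h.commute⟩
  calc a ^ (i + k) * x * a = a ^ i * (a ^ k * x * a) := by simp only [pow_add, mul_assoc]
    _ = a ^ (i + k) := by rw [h.pow_mul_mul, pow_add]

theorem mul_mul_pow (h : IsDrazinInv a x k) : a * x * a ^ k = a ^ k := by
  calc a * x * a ^ k = a ^ k * x * a := by
        rw [mul_assoc, ((h.commute.pow_left k).eq).symm, ← mul_assoc, ← pow_succ', pow_succ,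
          mul_assoc, h.commute.eq, mul_assoc]
    _ = a ^ k := h.pow_mul_mul

theorem unique (hx : IsDrazinInv a x k) (hz : IsDrazinInv a z m) : x = z := by
  have hx' := hx.mono (Nat.le_add_right k m)
  have hz' := hz.mono (Nat.le_add_left m k)
  have hxz : x = x * z * a :=
    calc x = x ^ (k + m + 1) * a ^ (k + m) := (pow_succ_mul_pow hx.mul_mul_self hx.commute _).symm
      _ = x ^ (k + m + 1) * (a ^ (k + m) * z * a) := by rw [hz'.pow_mul_mul]
      _ = x ^ (k + m + 1) * a ^ (k + m) * z * a := by simp only [mul_assoc]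
      _ = x * z * a := by rw [pow_succ_mul_pow hx.mul_mul_self hx.commute]
  have hzx : z = a * x * z :=
    calc z = a ^ (k + m) * z ^ (k + m + 1) := (pow_mul_pow_succ hz.mul_mul_self hz.commute _).symm
      _ = a * x * a ^ (k + m) * z ^ (k + m + 1) := by rw [hx'.mul_mul_pow]
      _ = a * x * (a ^ (k + m) * z ^ (k + m + 1)) := by simp only [mul_assoc]
      _ = a * x * z := by rw [pow_mul_pow_succ hz.mul_mul_self hz.commute]
  calc x = x * z * a := hxz
    _ = a * x * z := by rw [mul_assoc, ← hz.commute.eq, ← mul_assoc, ← hx.commute.eq]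
    _ = z := hzx.symm

end Monoid

section Ring

variable {R : Type*} [Ring R] {a e x y : R} {k m : ℕ}

theorem isIdempotentElem_mul (hx : IsDrazinInv a x k) : IsIdempotentElem (a * x) := by
  rw [IsIdempotentElem, mul_assoc, ← mul_assoc x, hx.mul_mul_self]

theorem mul_mul_right (hx : IsDrazinInv a x k) : a * x * x = x := by
  rw [hx.commute.eq, hx.mul_mul_self]

theorem commute_mul_one_add_mul (hx : IsDrazinInv a x k) (hep : e * (a * x) = e) :
    Commute (a * x) (1 + x * e) := by
  calc a * x * (1 + x * e) = a * x + a * x * x * e := by noncomm_ring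
    _ = a * x + x * (e * (a * x)) := by rw [hx.mul_mul_right, hep]
    _ = (1 + x * e) * (a * x) := by noncomm_ring

theorem add_pow_mul_mul (hx : IsDrazinInv a x k) (hep : e * (a * x) = e) :
    (a + e) ^ k * (a * x) = (a + e) ^ k := by
  have hsemi : SemiconjBy (1 - a * x) a (a + e) := by
    calc (1 - a * x) * a = a - a * (a * x) := by
          rw [sub_mul, one_mul, mul_assoc, ← hx.commute.eq]
      _ = (a + e) * (1 - a * x) := by rw [mul_sub, mul_one, add_mul, hep]; noncomm_ring
  have hzero : (1 - a * x) * a ^ k = 0 := by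
    rw [sub_mul, one_mul, hx.mul_mul_pow, sub_self]
  rw [hsemi.pow_right k, mul_sub, mul_one, sub_eq_zero] at hzero
  exact hzero.symm

theorem add (hx : IsDrazinInv a x k) (he : e = a * x * e * (a * x)) (u : Rˣ)
    (hu : (u : R) = 1 + x * e) :
    IsDrazinInv (a + e) (↑u⁻¹ * x) k ∧ (a + e) * (↑u⁻¹ * x) = a * x := by
  obtain ⟨hpe, hep⟩ := hx.isIdempotentElem_mul.mul_eq_and_mul_eq_of_eq_mul_mul he
  have hleft : (a + e) * (↑u⁻¹ * x) = a * x := by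
    have : a + e = a * u := by rw [hu, mul_add, mul_one, ← mul_assoc, hpe]
    rw [this, mul_assoc, ← mul_assoc (u : R), u.mul_inv, one_mul]
  have hright : ↑u⁻¹ * x * (a + e) = a * x := by
    have : x * (a + e) = u * (a * x) := by
      calc x * (a + e) = x * a + x * (e * (a * x)) := by rw [hep, mul_add]
        _ = u * (a * x) := by rw [hu, ← hx.commute.eq]; noncomm_ring
    rw [mul_assoc, this, ← mul_assoc, u.inv_mul, one_mul]
  have hcomm : Commute (a * x) ↑u⁻¹ :=
    (hu ▸ hx.commute_mul_one_add_mul hep : Commute (a * x) u).units_inv_right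
  refine ⟨⟨?_, ?_, hleft.trans hright.symm⟩, hleft⟩
  · rw [mul_assoc, hright, hx.add_pow_mul_mul hep]
  · rw [hright, ← mul_assoc, hcomm.eq, mul_assoc, hx.mul_mul_right]

theorem perturbation_identities (hx : IsDrazinInv a x k) (hy : IsDrazinInv (a + e) y m)
    (he : e = a * x * e * (a * x)) (hu : IsUnit (1 + x * e)) :
    a * x = (a + e) * y ∧ (1 + x * e) * y = x ∧ y * (1 + e * x) = x := by
  obtain ⟨u, hu⟩ := hu
  obtain ⟨hz, hbz⟩ := hx.add he u hu
  obtain rfl : y = ↑u⁻¹ * x := hy.unique hz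
  refine ⟨hbz.symm, by rw [← hu, ← mul_assoc, u.mul_inv, one_mul], ?_⟩
  calc ↑u⁻¹ * x * (1 + e * x) = ↑u⁻¹ * ((1 + x * e) * x) := by noncomm_ring
    _ = x := by rw [← hu, ← mul_assoc, u.inv_mul, one_mul]

end Ring

end IsDrazinInv

theorem Matrix.isUnit_of_mulVec_eq_zero {ι D : Type*} [Fintype ι] [DecidableEq ι] [DivisionRing D]
    {M : Matrix ι ι D} (h : ∀ v, M.mulVec v = 0 → v = 0) : IsUnit M := by
  refine IsArtinianRing.isUnit_iff_isLeftRegular.mpr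
    (Matrix.isLeftRegular_iff_mulVec_injective.mpr fun v w hvw => ?_)
  exact sub_eq_zero.mp (h _ (by rw [Matrix.mulVec_sub, hvw, sub_self]))

theorem isUnit_one_add_of_specNorm_lt_one {n : ℕ} {T : Matrix (Fin n) (Fin n) ℍ}
    (hT : specNorm T < 1) : IsUnit (1 + T) := by
  refine Matrix.isUnit_of_mulVec_eq_zero fun v hv => ?_
  have hTv : mulVecCLM T (WithLp.toLp 2 v) = -WithLp.toLp 2 v := by
    rw [Matrix.add_mulVec, Matrix.one_mulVec] at hv
    exact congrArg (WithLp.toLp 2) (eq_neg_of_add_eq_zero_right hv)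
  have hle := (mulVecCLM T).le_opNorm (WithLp.toLp 2 v)
  rw [hTv, norm_neg] at hle
  have hT' : ‖mulVecCLM T‖ < 1 := hT
  have : ‖WithLp.toLp 2 v‖ = 0 := by nlinarith [norm_nonneg (WithLp.toLp 2 v)]
  simpa using this

/-- Perturbation identities for the Drazin inverse of quaternion matrices, under the
norm hypothesis `‖X * E‖₂ < 1`. -/
theorem drazin_perturbation_identities_of_norm {n : ℕ}
    (A E B X Y : Matrix (Fin n) (Fin n) ℍ) (k m : ℕ)
    (hB : B = A + E)
    (hX : IsDrazinInverse A X k) (hY : IsDrazinInverse B Y m)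
    (hE : E = (A * X) * E * (A * X))
    (hnorm : specNorm (X * E) < 1) :
    A * X = B * Y ∧
    Y - X = -(Y * E * X) ∧ Y - X = -(X * E * Y) ∧
    IsUnit (1 + X * E) ∧ IsUnit (1 + E * X) ∧
    (1 + X * E) * Y = X ∧ Y * (1 + E * X) = X := by
  subst hB
  have hu := isUnit_one_add_of_specNorm_lt_one hnorm
  obtain ⟨hAXB, hleft, hright⟩ := (isDrazinInverse_iff.mp hX).perturbation_identities
    (isDrazinInverse_iff.mp hY) hE hu
  refine ⟨hAXB, ?_, ?_, hu, isUnit_one_add_mul_comm hu, hleft, hright⟩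
  · conv_lhs => rw [← hright]
    noncomm_ring
  · conv_lhs => rw [← hleft]
    noncomm_ring
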